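/- arXiv:2207.01225 — 2 statements merged into one kernel-verified Lean document; each statement's English description precedes it below -/
import Mathlib

section
/- Let (S, ⋆) be a finite fusion rule, λ : S → F a map, and n a positive integer. Then there exists a commutative nonassociative F-algebra U equipped with n (S,⋆)-decompositions (U_s^i)_{s∈S} (i = 1,…,n) and elements u₁,…,u_n such that (u_i, (U_s^i)_{s∈S}) is an (F,λ)-axis for each i, U is the smallest subalgebra of U containing u₁,…,u_n and invariant under every projection pr_s^i, and with the following universal property: for every commutative nonassociative F-algebra N equipped with n (S,⋆)-decompositions (N_s^i)_{s∈S} and elements b₁,…,b_n such that each (b_i, (N_s^i)_{s∈S}) is an (F,λ)-axis and N is the smallest subalgebra of N containing b₁,…,b_n and invariant under all its projections, there exists a unique F-algebra homomorphism φ : U → N with φ(u_i) = b_i and φ(U_s^i) ⊆ N_s^i for all i = 1,…,n and s ∈ S; moreover this φ is surjective. -/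
/-- A commutative nonassociative algebra over the field `F`, bundled with its structure. -/
structure CommNAAlg (F : Type) [Field F] where
  carrier : Type
  [ring : NonUnitalNonAssocCommRing carrier]
  [mod : Module F carrier]
  [scc : SMulCommClass F carrier carrier]
  [ist : IsScalarTower F carrier carrier]

attribute [instance] CommNAAlg.ring CommNAAlg.mod CommNAAlg.scc CommNAAlg.ist

/-- An `(S,⋆)`-decomposition of `M`: a direct sum decomposition `M = ⊕_{s ∈ S} M_s`
(recorded together with its projections `pr_s`) satisfying the fusion rule `⋆`. -/
structure Decomposition (F : Type) [Field F] (M : Type) [NonUnitalNonAssocCommRing M]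
    [Module F M] (S : Type) [Fintype S] (star : S → S → Set S) where
  comp : S → Submodule F M
  proj : S → M →ₗ[F] M
  proj_mem : ∀ s x, proj s x ∈ comp s
  proj_eq_self : ∀ s, ∀ x ∈ comp s, proj s x = x
  proj_eq_zero : ∀ s t, s ≠ t → ∀ x ∈ comp t, proj s x = 0
  sum_proj : ∀ x, ∑ s, proj s x = x
  fusion : ∀ s t, ∀ x ∈ comp s, ∀ y ∈ comp t, x * y ∈ ⨆ u ∈ star s t, comp u

/-- `M` is generated by `X` as a decomposition algebra (w.r.t. the family of
decompositions `D`): the smallest subalgebra containing `X` and invariant under all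
the projections of all the decompositions is `M` itself. -/
def GensDecompAlg {F : Type} [Field F] {M : Type} [NonUnitalNonAssocCommRing M]
    [Module F M] {S : Type} [Fintype S] {star : S → S → Set S} {J : Type}
    (D : J → Decomposition F M S star) (X : Set M) : Prop :=
  ∀ A : NonUnitalSubalgebra F M, X ⊆ ↑A →
    (∀ j s, ∀ x ∈ A, (D j).proj s x ∈ A) → ∀ x : M, x ∈ A

/-- `(a, D)` is an `(F,λ)`-axis: `a` acts on the component `D_s` as the scalar `λ s`. -/
def IsLambdaAxis {F : Type} [Field F] {M : Type} [NonUnitalNonAssocCommRing M]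
    [Module F M] {S : Type} [Fintype S] {star : S → S → Set S}
    (lam : S → F) (a : M) (D : Decomposition F M S star) : Prop :=
  ∀ s, ∀ x ∈ D.comp s, a * x = lam s • x

/-! The universal object is the magma algebra on formal terms, built from `n` generators by
products and the formal projections of `n` decompositions, modulo the elements that evaluate to
zero in every axial decomposition algebra with `n` axes. Every identity demanded of the axes and
decompositions holds in each such algebra, hence in the quotient, and evaluation descends to a
morphism into any of them. Uniqueness and surjectivity both come from generation: equalizers and
ranges of morphisms respecting the decompositions are closed under the projections. -/

namespace Decomposition

variable {F : Type} [Field F] {M N : Type} [NonUnitalNonAssocCommRing M] [Module F M]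
  [NonUnitalNonAssocCommRing N] [Module F N] {S : Type} [Fintype S] {star : S → S → Set S}

theorem proj_mul_eq_zero (D : Decomposition F M S star) {s t u : S} (hu : u ∉ star s t)
    {x y : M} (hx : x ∈ D.comp s) (hy : y ∈ D.comp t) : D.proj u (x * y) = 0 := by
  have hle : (⨆ v ∈ star s t, D.comp v) ≤ LinearMap.ker (D.proj u) :=
    iSup₂_le fun v hv z hz => D.proj_eq_zero u v (fun h => hu (h ▸ hv)) z hz
  exact hle (D.fusion s t x hx y hy)

def ofProj (p : S → M →ₗ[F] M) (idem : ∀ s x, p s (p s x) = p s x)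
    (orth : ∀ s t, s ≠ t → ∀ x, p s (p t x) = 0) (sum : ∀ x, ∑ s, p s x = x)
    (fus : ∀ s t u, u ∉ star s t → ∀ x y, p u (p s x * p t y) = 0) :
    Decomposition F M S star where
  comp s := LinearMap.range (p s)
  proj := p
  proj_mem s x := ⟨x, rfl⟩
  proj_eq_self := by
    rintro s _ ⟨x, rfl⟩
    exact idem s x
  proj_eq_zero := by
    rintro s t hst _ ⟨x, rfl⟩
    exact orth s t hst x
  sum_proj := sum
  fusion := by
    rintro s t _ ⟨x, rfl⟩ _ ⟨y, rfl⟩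
    rw [← sum (p s x * p t y)]
    refine Submodule.sum_mem _ fun u _ => ?_
    by_cases hu : u ∈ star s t
    · exact Submodule.mem_iSup_of_mem u (Submodule.mem_iSup_of_mem hu ⟨_, rfl⟩)
    · rw [fus s t u hu x y]
      exact Submodule.zero_mem _

theorem map_proj {J : Type} {D : J → Decomposition F M S star}
    {E : J → Decomposition F N S star} {G : Type} [FunLike G M N] [AddMonoidHomClass G M N]
    (φ : G) (hφ : ∀ j s, ∀ x ∈ (D j).comp s, φ x ∈ (E j).comp s) (j : J) (s : S)
    (x : M) : φ ((D j).proj s x) = (E j).proj s (φ x) := by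
  conv_rhs => rw [← (D j).sum_proj x, map_sum, map_sum]
  rw [Finset.sum_eq_single_of_mem s (Finset.mem_univ s) fun t _ hts =>
    (E j).proj_eq_zero s t (Ne.symm hts) _ (hφ j t _ ((D j).proj_mem t x))]
  exact ((E j).proj_eq_self s _ (hφ j s _ ((D j).proj_mem s x))).symm

end Decomposition

namespace GensDecompAlg

variable {F : Type} [Field F] {M N : Type} [NonUnitalNonAssocCommRing M] [Module F M]
  [NonUnitalNonAssocCommRing N] [Module F N] {S : Type} [Fintype S] {star : S → S → Set S}
  {J : Type} {D : J → Decomposition F M S star} {E : J → Decomposition F N S star}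

theorem hom_ext {X : Set M} (hgen : GensDecompAlg D X) {φ ψ : M →ₙₐ[F] N}
    (hφ : ∀ j s, ∀ x ∈ (D j).comp s, φ x ∈ (E j).comp s)
    (hψ : ∀ j s, ∀ x ∈ (D j).comp s, ψ x ∈ (E j).comp s) (h : Set.EqOn φ ψ X) :
    φ = ψ :=
  NonUnitalAlgHom.ext <| hgen (NonUnitalAlgHom.equalizer φ ψ) h fun j s x (hx : φ x = ψ x) => by
    change φ _ = ψ _
    rw [Decomposition.map_proj φ hφ, Decomposition.map_proj ψ hψ, hx]

theorem surjective_of_subset_range {Y : Set N} (hgen : GensDecompAlg E Y) {φ : M →ₙₐ[F] N}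
    (hφ : ∀ j s, ∀ x ∈ (D j).comp s, φ x ∈ (E j).comp s) (hY : Y ⊆ Set.range φ) :
    Function.Surjective φ := fun y =>
  (NonUnitalAlgHom.mem_range φ).1 <| hgen (NonUnitalAlgHom.range φ) hY (by
    rintro j s _ ⟨x, rfl⟩
    exact ⟨(D j).proj s x, Decomposition.map_proj φ hφ j s x⟩) y

end GensDecompAlg

inductive AxialTerm (S : Type) (n : ℕ) : Type
  | gen : Fin n → AxialTerm S n
  | mul : AxialTerm S n → AxialTerm S n → AxialTerm S n
  | proj : Fin n → S → AxialTerm S n → AxialTerm S n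

namespace AxialTerm

variable {F : Type} [Field F] {S : Type} [Fintype S] {star : S → S → Set S} {n : ℕ}

instance : Mul (AxialTerm S n) := ⟨mul⟩

section Eval

variable {N : Type} [NonUnitalNonAssocCommRing N] [Module F N]
  (E : Fin n → Decomposition F N S star) (b : Fin n → N)

def eval : AxialTerm S n → N
  | gen i => b i
  | mul x y => eval x * eval y
  | proj j s x => (E j).proj s (eval x)

@[simps]
def evalMulHom : AxialTerm S n →ₙ* N where
  toFun := eval E b
  map_mul' _ _ := rfl

end Eval

end AxialTerm

namespace UniversalAxial

noncomputable section

open AxialTerm MonoidAlgebra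

variable {F : Type} [Field F] {S : Type} [Fintype S] {star : S → S → Set S} {n : ℕ}

variable (F S n) in
abbrev FreeAlg : Type := MonoidAlgebra F (AxialTerm S n)

variable (F) in
def formalProj (j : Fin n) (s : S) : FreeAlg F S n →ₗ[F] FreeAlg F S n :=
  mapDomainLinearMap F F (AxialTerm.proj j s)

variable (F) in
def freeGen (i : Fin n) : FreeAlg F S n := single (gen i) 1

section Eval

variable {N : Type} [NonUnitalNonAssocCommRing N] [Module F N] [SMulCommClass F N N]
  [IsScalarTower F N N] (E : Fin n → Decomposition F N S star) (b : Fin n → N)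

def evalHom : FreeAlg F S n →ₙₐ[F] N := liftMagma F (evalMulHom E b)

theorem evalHom_single (t : AxialTerm S n) (c : F) :
    evalHom E b (single t c) = c • eval E b t := by
  simp [evalHom]

theorem evalHom_freeGen (i : Fin n) : evalHom E b (freeGen F i) = b i := by
  rw [freeGen, evalHom_single, one_smul, eval]

theorem evalHom_formalProj (j : Fin n) (s : S) (x : FreeAlg F S n) :
    evalHom E b (formalProj F j s x) = (E j).proj s (evalHom E b x) := by
  induction x using MonoidAlgebra.induction_linear with
  | zero => simp only [map_zero]
  | add x y hx hy => simp only [map_add, hx, hy]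
  | single t c => rw [formalProj, mapDomainLinearMap_single, evalHom_single, evalHom_single,
      map_smul, eval]

end Eval

variable (F S star n) in
def relations (lam : S → F) : Submodule F (FreeAlg F S n) :=
  ⨅ (N : CommNAAlg F) (E : Fin n → Decomposition F N.carrier S star) (b : Fin n → N.carrier)
    (_ : ∀ i, IsLambdaAxis lam (b i) (E i)),
      LinearMap.ker (evalHom E b : FreeAlg F S n →ₗ[F] N.carrier)

variable {lam : S → F}

theorem mem_relations {x : FreeAlg F S n} :
    x ∈ relations F S star n lam ↔
      ∀ (N : CommNAAlg F) (E : Fin n → Decomposition F N.carrier S star)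
        (b : Fin n → N.carrier), (∀ i, IsLambdaAxis lam (b i) (E i)) → evalHom E b x = 0 := by
  simp only [relations, Submodule.mem_iInf, LinearMap.mem_ker]
  rfl

theorem mul_mem_relations_left {x : FreeAlg F S n} (hx : x ∈ relations F S star n lam)
    (y : FreeAlg F S n) : x * y ∈ relations F S star n lam :=
  mem_relations.2 fun N E b hb => by rw [map_mul, mem_relations.1 hx N E b hb, zero_mul]

theorem mul_mem_relations_right (x : FreeAlg F S n) {y : FreeAlg F S n}
    (hy : y ∈ relations F S star n lam) : x * y ∈ relations F S star n lam :=
  mem_relations.2 fun N E b hb => by rw [map_mul, mem_relations.1 hy N E b hb, mul_zero]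

theorem formalProj_mem_relations (j : Fin n) (s : S) {x : FreeAlg F S n}
    (hx : x ∈ relations F S star n lam) : formalProj F j s x ∈ relations F S star n lam :=
  mem_relations.2 fun N E b hb => by
    rw [evalHom_formalProj, mem_relations.1 hx N E b hb, map_zero]

variable (F S star n lam) in
abbrev Carrier : Type := FreeAlg F S n ⧸ relations F S star n lam

def mk : FreeAlg F S n →ₗ[F] Carrier F S star n lam := (relations F S star n lam).mkQ

theorem mk_surjective :
    Function.Surjective (mk : FreeAlg F S n →ₗ[F] Carrier F S star n lam) :=
  Submodule.mkQ_surjective _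

theorem mk_eq_mk {x y : FreeAlg F S n}
    (h : ∀ (N : CommNAAlg F) (E : Fin n → Decomposition F N.carrier S star)
      (b : Fin n → N.carrier), (∀ i, IsLambdaAxis lam (b i) (E i)) →
        evalHom E b x = evalHom E b y) :
    (mk x : Carrier F S star n lam) = mk y :=
  (Submodule.Quotient.eq _).2 <| mem_relations.2 fun N E b hb => by
    rw [map_sub, h N E b hb, sub_self]

variable (F S star n lam) in
def mulBilin :
    Carrier F S star n lam →ₗ[F] Carrier F S star n lam →ₗ[F] Carrier F S star n lam :=
  ((LinearMap.mul F (FreeAlg F S n)).compr₂ (relations F S star n lam).mkQ).liftQ₂ _ _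
    (fun _ hx => LinearMap.ext fun y => (Submodule.Quotient.mk_eq_zero _).2
      (mul_mem_relations_left hx y))
    (fun _ hy => LinearMap.ext fun x => (Submodule.Quotient.mk_eq_zero _).2
      (mul_mem_relations_right x hy))

instance : NonUnitalNonAssocCommRing (Carrier F S star n lam) where
  mul x y := mulBilin F S star n lam x y
  left_distrib x y z := map_add (mulBilin F S star n lam x) y z
  right_distrib x y z := LinearMap.map_add₂ _ x y z
  zero_mul x := LinearMap.map_zero₂ _ x
  mul_zero x := map_zero (mulBilin F S star n lam x)
  mul_comm x y := by
    obtain ⟨x, rfl⟩ := mk_surjective x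
    obtain ⟨y, rfl⟩ := mk_surjective y
    change (mk (x * y) : Carrier F S star n lam) = mk (y * x)
    exact mk_eq_mk fun N E b _ => by rw [map_mul, map_mul, mul_comm]

theorem mk_mul (x y : FreeAlg F S n) :
    (mk (x * y) : Carrier F S star n lam) = mk x * mk y := rfl

instance : SMulCommClass F (Carrier F S star n lam) (Carrier F S star n lam) :=
  ⟨fun c x y => (map_smul (mulBilin F S star n lam x) c y).symm⟩

instance : IsScalarTower F (Carrier F S star n lam) (Carrier F S star n lam) :=
  ⟨fun c x y => LinearMap.map_smul₂ (mulBilin F S star n lam) c x y⟩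

variable (F S star n lam) in
def projQ (j : Fin n) (s : S) : Carrier F S star n lam →ₗ[F] Carrier F S star n lam :=
  Submodule.mapQ _ _ (formalProj F j s) fun _ => formalProj_mem_relations j s

theorem projQ_mk (j : Fin n) (s : S) (x : FreeAlg F S n) :
    projQ F S star n lam j s (mk x) = mk (formalProj F j s x) := rfl

variable (F S star n lam) in
def decomp (j : Fin n) : Decomposition F (Carrier F S star n lam) S star :=
  Decomposition.ofProj (projQ F S star n lam j)
    (fun s x => by
      obtain ⟨x, rfl⟩ := mk_surjective x
      exact mk_eq_mk fun N E b _ => by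
        rw [evalHom_formalProj, evalHom_formalProj, (E j).proj_eq_self s _ ((E j).proj_mem s _)])
    (fun s t hst x => by
      obtain ⟨x, rfl⟩ := mk_surjective x
      refine (mk_eq_mk fun N E b _ => ?_).trans (map_zero mk)
      rw [evalHom_formalProj, evalHom_formalProj, map_zero,
        (E j).proj_eq_zero s t hst _ ((E j).proj_mem t _)])
    (fun x => by
      obtain ⟨x, rfl⟩ := mk_surjective x
      refine (map_sum mk _ _).symm.trans (mk_eq_mk fun N E b _ => ?_)
      simp only [map_sum, evalHom_formalProj, (E j).sum_proj])
    (fun s t u hu x y => by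
      obtain ⟨x, rfl⟩ := mk_surjective x
      obtain ⟨y, rfl⟩ := mk_surjective y
      rw [projQ_mk, projQ_mk, ← mk_mul, projQ_mk]
      refine (mk_eq_mk fun N E b _ => ?_).trans (map_zero mk)
      rw [evalHom_formalProj, map_mul, evalHom_formalProj, evalHom_formalProj, map_zero,
        (E j).proj_mul_eq_zero hu ((E j).proj_mem s _) ((E j).proj_mem t _)])

variable (F S star n lam) in
def axis (i : Fin n) : Carrier F S star n lam := mk (freeGen F i)

theorem isLambdaAxis_axis (i : Fin n) :
    IsLambdaAxis lam (axis F S star n lam i) (decomp F S star n lam i) := by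
  rintro s _ ⟨x, rfl⟩
  obtain ⟨x, rfl⟩ := mk_surjective x
  rw [projQ_mk, axis, ← mk_mul, ← map_smul]
  exact mk_eq_mk fun N E b hb => by
    rw [map_mul, map_smul, evalHom_freeGen, evalHom_formalProj, hb i s _ ((E i).proj_mem s _)]

theorem gensDecompAlg_axis :
    GensDecompAlg (decomp F S star n lam) (Set.range (axis F S star n lam)) := by
  intro A hgen hproj x
  have hterm : ∀ t : AxialTerm S n, (mk (single t 1) : Carrier F S star n lam) ∈ A := by
    intro t
    induction t with
    | gen i => exact hgen ⟨i, rfl⟩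
    | mul t t' ht ht' =>
      rw [show (single (t.mul t') 1 : FreeAlg F S n) = single t 1 * single t' 1 by
        rw [single_mul_single, one_mul]; rfl]
      exact mul_mem ht ht'
    | proj j s t ht =>
      have := hproj j s _ ht
      rwa [decomp, Decomposition.ofProj, projQ_mk, formalProj, mapDomainLinearMap_single] at this
  obtain ⟨x, rfl⟩ := mk_surjective x
  induction x using MonoidAlgebra.induction_linear with
  | zero => simpa only [map_zero] using zero_mem A
  | add x y hx hy => simpa only [map_add] using add_mem hx hy
  | single t c =>
    rw [← mul_one c, ← smul_eq_mul, ← smul_single, map_smul]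
    exact SMulMemClass.smul_mem c (hterm t)

section Lift

variable (N : CommNAAlg F) (E : Fin n → Decomposition F N.carrier S star)
  (b : Fin n → N.carrier) (hb : ∀ i, IsLambdaAxis lam (b i) (E i))

def liftLinear : Carrier F S star n lam →ₗ[F] N.carrier :=
  (relations F S star n lam).liftQ (evalHom E b : FreeAlg F S n →ₗ[F] N.carrier)
    fun _ hx => mem_relations.1 hx N E b hb

def lift : Carrier F S star n lam →ₙₐ[F] N.carrier where
  __ := liftLinear N E b hb
  map_zero' := map_zero _
  map_mul' x y := by
    obtain ⟨x, rfl⟩ := mk_surjective x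
    obtain ⟨y, rfl⟩ := mk_surjective y
    exact map_mul (evalHom E b) x y

theorem lift_mk (x : FreeAlg F S n) : lift N E b hb (mk x) = evalHom E b x := rfl

theorem lift_axis (i : Fin n) : lift N E b hb (axis F S star n lam i) = b i :=
  evalHom_freeGen E b i

theorem lift_mem_comp (i : Fin n) (s : S) :
    ∀ x ∈ (decomp F S star n lam i).comp s, lift N E b hb x ∈ (E i).comp s := by
  rintro _ ⟨x, rfl⟩
  obtain ⟨x, rfl⟩ := mk_surjective x
  rw [projQ_mk, lift_mk, evalHom_formalProj]
  exact (E i).proj_mem s _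

end Lift

end

end UniversalAxial

theorem universal_axial_decomposition_algebra_general (F : Type) [Field F]
    (S : Type) [Fintype S] (star : S → S → Set S)
    (lam : S → F) (n : ℕ) :
    ∃ (U : CommNAAlg F) (D : Fin n → Decomposition F U.carrier S star)
      (u : Fin n → U.carrier),
      (∀ i, IsLambdaAxis lam (u i) (D i)) ∧
      GensDecompAlg D (Set.range u) ∧
      ∀ (N : CommNAAlg F) (E : Fin n → Decomposition F N.carrier S star)
        (b : Fin n → N.carrier),
        (∀ i, IsLambdaAxis lam (b i) (E i)) → GensDecompAlg E (Set.range b) →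
        (∃! φ : U.carrier →ₙₐ[F] N.carrier,
            (∀ i, φ (u i) = b i) ∧
            ∀ i s, ∀ x ∈ (D i).comp s, φ x ∈ (E i).comp s) ∧
        ∀ φ : U.carrier →ₙₐ[F] N.carrier,
          ((∀ i, φ (u i) = b i) ∧
            ∀ i s, ∀ x ∈ (D i).comp s, φ x ∈ (E i).comp s) →
          Function.Surjective φ := by
  refine ⟨⟨UniversalAxial.Carrier F S star n lam⟩, UniversalAxial.decomp F S star n lam,
    UniversalAxial.axis F S star n lam, UniversalAxial.isLambdaAxis_axis,
    UniversalAxial.gensDecompAlg_axis, fun N E b hb hgen => ⟨?_, ?_⟩⟩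
  · refine ⟨UniversalAxial.lift N E b hb,
      ⟨UniversalAxial.lift_axis N E b hb, UniversalAxial.lift_mem_comp N E b hb⟩, ?_⟩
    rintro φ ⟨hφ_axis, hφ_comp⟩
    refine UniversalAxial.gensDecompAlg_axis.hom_ext hφ_comp
      (UniversalAxial.lift_mem_comp N E b hb) ?_
    rintro _ ⟨i, rfl⟩
    rw [hφ_axis, UniversalAxial.lift_axis]
  · rintro φ ⟨hφ_axis, hφ_comp⟩
    refine hgen.surjective_of_subset_range hφ_comp ?_
    rintro _ ⟨i, rfl⟩
    exact ⟨_, hφ_axis i⟩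

/-- Corollary 2: the category of `(F,λ)`-axial decomposition algebras over `F`
generated by `n` axes has a universal object. -/
theorem universal_axial_decomposition_algebra (F : Type) [Field F]
    (hchar : ringChar F ≠ 2) (S : Type) [Fintype S] (star : S → S → Set S)
    (lam : S → F) (n : ℕ) (hn : 0 < n) :
    ∃ (U : CommNAAlg F) (D : Fin n → Decomposition F U.carrier S star)
      (u : Fin n → U.carrier),
      (∀ i, IsLambdaAxis lam (u i) (D i)) ∧
      GensDecompAlg D (Set.range u) ∧
      ∀ (N : CommNAAlg F) (E : Fin n → Decomposition F N.carrier S star)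
        (b : Fin n → N.carrier),
        (∀ i, IsLambdaAxis lam (b i) (E i)) → GensDecompAlg E (Set.range b) →
        (∃! φ : U.carrier →ₙₐ[F] N.carrier,
            (∀ i, φ (u i) = b i) ∧
            ∀ i s, ∀ x ∈ (D i).comp s, φ x ∈ (E i).comp s) ∧
        ∀ φ : U.carrier →ₙₐ[F] N.carrier,
          ((∀ i, φ (u i) = b i) ∧
            ∀ i s, ∀ x ∈ (D i).comp s, φ x ∈ (E i).comp s) →
          Function.Surjective φ :=
  universal_axial_decomposition_algebra_general F S star lam n
end

section
/- The elements a + s₀ and a + s₁ are axes of associative type in 2Â which generate 2Â as an F-algebra, so (2Â, {a+s₀, a+s₁}) is a 2-generated axial algebra of associative type; and it is universal: for every commutative nonassociative F-algebra N generated by two axes of associative type b₀, b₁, there exists a unique F-algebra homomorphism φ : 2Â → N with φ(a+s₀) = b₀ and φ(a+s₁) = b₁, and this φ is surjective. -/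
/-- The `s`-eigenspace of left multiplication by `a`. -/
def eigSp {F M : Type} [Field F] [NonUnitalNonAssocCommRing M] [Module F M]
    [SMulCommClass F M M] [IsScalarTower F M M] (a : M) (s : F) : Submodule F M where
  carrier := {x | a * x = s • x}
  add_mem' := by
    intro x y hx hy
    simp only [Set.mem_setOf_eq] at *
    rw [mul_add, hx, hy, smul_add]
  zero_mem' := by simp
  smul_mem' := by
    intro c x hx
    simp only [Set.mem_setOf_eq] at *
    rw [mul_smul_comm, hx, smul_smul, mul_comm, ← smul_smul]

/-- An axis of associative type: an idempotent `b` with `M = E₁(b) ⊕ E₀(b)` obeying the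
associative-type fusion rule. -/
def IsAssocAxis {F M : Type} [Field F] [NonUnitalNonAssocCommRing M] [Module F M]
    [SMulCommClass F M M] [IsScalarTower F M M] (b : M) : Prop :=
  b * b = b ∧
  (∀ x1 ∈ eigSp b (1 : F), ∀ x0 ∈ eigSp b (0 : F), x1 + x0 = 0 → x1 = 0 ∧ x0 = 0) ∧
  (∀ x : M, ∃ x1 ∈ eigSp b (1 : F), ∃ x0 ∈ eigSp b (0 : F), x = x1 + x0) ∧
  (∀ x ∈ eigSp b (0 : F), ∀ y ∈ eigSp b (0 : F), x * y ∈ eigSp b (0 : F)) ∧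
  (∀ x ∈ eigSp b (1 : F), ∀ y ∈ eigSp b (1 : F), x * y ∈ eigSp b (1 : F)) ∧
  (∀ x ∈ eigSp b (0 : F), ∀ y ∈ eigSp b (1 : F), x * y ∈ eigSp b (0 : F) ⊔ eigSp b (1 : F))

lemma mem_eigSp {F M : Type} [Field F] [NonUnitalNonAssocCommRing M] [Module F M]
    [SMulCommClass F M M] [IsScalarTower F M M] {a : M} {s : F} {x : M} :
    x ∈ eigSp a s ↔ a * x = s • x := Iff.rfl

-- any 0/1 vector is an axis of associative type in the pointwise algebra
lemma axis01 {F : Type} [Field F] (b : Fin 3 → F) (hb : ∀ i, b i = 0 ∨ b i = 1) :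
    IsAssocAxis (F := F) b := by
  have key : ∀ i, b i * b i = b i := by
    intro i; rcases hb i with h | h <;> simp [h]
  refine ⟨funext key, ?_, ?_, ?_, ?_, ?_⟩
  · intro x1 hx1 x0 hx0 hsum
    rw [mem_eigSp] at hx1 hx0
    simp only [one_smul] at hx1
    simp only [zero_smul] at hx0
    have h1 : ∀ i, b i * x1 i = x1 i := fun i => congrFun hx1 i
    have h0 : ∀ i, b i * x0 i = 0 := fun i => congrFun hx0 i
    have hs : ∀ i, x1 i + x0 i = 0 := fun i => congrFun hsum i
    have hz : ∀ i, x1 i = 0 ∧ x0 i = 0 := by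
      intro i
      rcases hb i with h | h
      · have e1 : x1 i = 0 := by have := h1 i; rw [h, zero_mul] at this; exact this.symm
        exact ⟨e1, by have := hs i; rw [e1, zero_add] at this; exact this⟩
      · have e0 : x0 i = 0 := by have := h0 i; rwa [h, one_mul] at this
        exact ⟨by have := hs i; rw [e0, add_zero] at this; exact this, e0⟩
    exact ⟨funext fun i => (hz i).1, funext fun i => (hz i).2⟩
  · intro x
    refine ⟨b * x, ?_, x - b * x, ?_, by abel⟩
    · rw [mem_eigSp, one_smul]
      funext i
      show b i * (b i * x i) = b i * x i
      rw [← mul_assoc, key i]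
    · rw [mem_eigSp, zero_smul]
      funext i
      show b i * (x i - b i * x i) = 0
      rw [mul_sub, ← mul_assoc, key i, sub_self]
  · intro x hx y _
    rw [mem_eigSp, zero_smul] at hx ⊢
    funext i
    show b i * (x i * y i) = 0
    have hxi : b i * x i = 0 := congrFun hx i
    rw [← mul_assoc, hxi, zero_mul]
  · intro x hx y _
    rw [mem_eigSp, one_smul] at hx ⊢
    funext i
    show b i * (x i * y i) = x i * y i
    have hxi : b i * x i = x i := congrFun hx i
    rw [← mul_assoc, hxi]
  · intro x hx y hy
    apply Submodule.mem_sup_left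
    rw [mem_eigSp, zero_smul] at hx ⊢
    funext i
    show b i * (x i * y i) = 0
    have hxi : b i * x i = 0 := congrFun hx i
    rw [← mul_assoc, hxi, zero_mul]

/-- The universal 2-generated axial algebra of associative type is `2Â`, realized as
`Fin 3 → F` with pointwise multiplication (basis `a, s₀, s₁`), generated by the axes
`a + s₀` and `a + s₁`. -/
theorem universal_assoc_type (F : Type) [Field F] (hchar : ringChar F ≠ 2) :
    ∀ a s₀ s₁ : Fin 3 → F,
      a = Pi.single 0 1 → s₀ = Pi.single 1 1 → s₁ = Pi.single 2 1 →
      IsAssocAxis (F := F) (a + s₀) ∧ IsAssocAxis (F := F) (a + s₁) ∧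
      NonUnitalAlgebra.adjoin F {a + s₀, a + s₁} = ⊤ ∧
      ∀ (N : CommNAAlg F) (b₀ b₁ : N.carrier),
        IsAssocAxis (F := F) b₀ → IsAssocAxis (F := F) b₁ →
        NonUnitalAlgebra.adjoin F {b₀, b₁} = ⊤ →
        (∃! φ : (Fin 3 → F) →ₙₐ[F] N.carrier, φ (a + s₀) = b₀ ∧ φ (a + s₁) = b₁) ∧
        ∀ φ : (Fin 3 → F) →ₙₐ[F] N.carrier,
          (φ (a + s₀) = b₀ ∧ φ (a + s₁) = b₁) → Function.Surjective φ := by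
  intro a s₀ s₁ ha hs₀ hs₁
  subst ha hs₀ hs₁
  set a : Fin 3 → F := Pi.single 0 1 with ha
  set s₀ : Fin 3 → F := Pi.single 1 1 with hs₀
  set s₁ : Fin 3 → F := Pi.single 2 1 with hs₁
  -- coordinate values of the generators
  have hg₀ : ∀ i, (a + s₀) i = if i = 2 then 0 else 1 := by
    intro i; fin_cases i <;> simp [ha, hs₀, Pi.single]
  have hg₁ : ∀ i, (a + s₁) i = if i = 1 then 0 else 1 := by
    intro i; fin_cases i <;> simp [ha, hs₁, Pi.single]
  have hax₀ : IsAssocAxis (F := F) (a + s₀) := by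
    apply axis01
    intro i; rw [hg₀ i]; split <;> simp
  have hax₁ : IsAssocAxis (F := F) (a + s₁) := by
    apply axis01
    intro i; rw [hg₁ i]; split <;> simp
  -- products of generators
  have hprod : (a + s₀) * (a + s₁) = a := by
    funext i; fin_cases i <;> simp [ha, hs₀, hs₁, Pi.single]
  have hdecomp : ∀ x : Fin 3 → F,
      x = x 0 • ((a+s₀)*(a+s₁)) + x 1 • ((a+s₀) - (a+s₀)*(a+s₁))
        + x 2 • ((a+s₁) - (a+s₀)*(a+s₁)) := by
    intro x; rw [hprod]; funext i; fin_cases i <;>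
      simp [ha, hs₀, hs₁, Pi.single]
  have hadj : NonUnitalAlgebra.adjoin F {a + s₀, a + s₁} = ⊤ := by
    rw [eq_top_iff]
    intro x _
    have hm₀ : a + s₀ ∈ NonUnitalAlgebra.adjoin F {a + s₀, a + s₁} :=
      NonUnitalAlgebra.subset_adjoin F (Set.mem_insert _ _)
    have hm₁ : a + s₁ ∈ NonUnitalAlgebra.adjoin F {a + s₀, a + s₁} :=
      NonUnitalAlgebra.subset_adjoin F (Set.mem_insert_of_mem _ rfl)
    rw [hdecomp x]
    exact add_mem (add_mem
      (SMulMemClass.smul_mem _ (mul_mem hm₀ hm₁))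
      (SMulMemClass.smul_mem _ (sub_mem hm₀ (mul_mem hm₀ hm₁))))
      (SMulMemClass.smul_mem _ (sub_mem hm₁ (mul_mem hm₀ hm₁)))
  refine ⟨hax₀, hax₁, hadj, ?_⟩
  intro N b₀ b₁ hb₀ hb₁ hNadj
  obtain ⟨hb₀i, _, hb₀dec, hb₀00, hb₀11, _⟩ := hb₀
  obtain ⟨hb₁i, _, hb₁dec, hb₁00, hb₁11, _⟩ := hb₁
  set c : N.carrier := b₀ * b₁ with hc
  -- b₀ * c = c
  have hb₀c : b₀ * c = c := by
    obtain ⟨x1, hx1, x0, hx0, hx⟩ := hb₀dec b₁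
    rw [mem_eigSp, one_smul] at hx1
    rw [mem_eigSp, zero_smul] at hx0
    have : c = x1 := by rw [hc, hx, mul_add, hx1, hx0, add_zero]
    rw [this, hx1]
  have hb₁c : b₁ * c = c := by
    obtain ⟨x1, hx1, x0, hx0, hx⟩ := hb₁dec b₀
    rw [mem_eigSp, one_smul] at hx1
    rw [mem_eigSp, zero_smul] at hx0
    have : c = x1 := by rw [hc, mul_comm, hx, mul_add, hx1, hx0, add_zero]
    rw [this, hx1]
  set u : N.carrier := b₀ - c with hu
  set v : N.carrier := b₁ - c with hv
  have hb₁u : b₁ * u = 0 := by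
    rw [hu, mul_sub, hb₁c, mul_comm, hc, sub_self]
  have hb₀v : b₀ * v = 0 := by
    rw [hv, mul_sub, hb₀c, hc, sub_self]
  have hb₀u : b₀ * u = u := by
    rw [hu, mul_sub, hb₀i, hb₀c]
  have hb₁v : b₁ * v = v := by
    rw [hv, mul_sub, hb₁i, hb₁c]
  -- c * u = c - c * c,  c * v = c - c * c
  have hcu : c * u = c - c * c := by
    have : c * b₀ = c := by rw [mul_comm]; exact hb₀c
    rw [hu, mul_sub, this]
  have hcv : c * v = c - c * c := by
    have : c * b₁ = c := by rw [mul_comm]; exact hb₁c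
    rw [hv, mul_sub, this]
  -- c * c = c
  have hcc : c * c = c := by
    -- c ∈ E₁(b₁), u ∈ E₀(b₁)
    have hcE : c ∈ eigSp b₁ (1 : F) := by rw [mem_eigSp, one_smul]; exact hb₁c
    have huE : u ∈ eigSp b₁ (0 : F) := by rw [mem_eigSp, zero_smul]; exact hb₁u
    have hccE : b₁ * (c * c) = c * c := by
      have := hb₁11 c hcE c hcE
      rw [mem_eigSp, one_smul] at this; exact this
    have huuE : b₁ * (u * u) = 0 := by
      have := hb₁00 u huE u huE
      rw [mem_eigSp, zero_smul] at this; exact this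
    -- b₀ = (c+u)² = c² + 2cu + u², hence u = c - c² + u² (using cu = c - c²)
    have hsq : b₀ = c * c + (2:F) • (c * u) + u * u := by
      have h1 : b₀ = c + u := by rw [hu]; abel
      calc b₀ = b₀ * b₀ := hb₀i.symm
        _ = (c + u) * (c + u) := by rw [← h1]
        _ = c * c + (2:F) • (c * u) + u * u := by
            rw [add_mul, mul_add, mul_add, mul_comm u c, two_smul]; abel
    have hkey : u = c - c * c + u * u := by
      have h1 : b₀ = c + u := by rw [hu]; abel
      have := hsq
      rw [h1, hcu] at this
      -- c + u = c*c + 2•(c - c*c) + u*u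
      have h2 : c + u = c * c + (2:F) • (c - c * c) + u * u := this
      have h3 : (2:F) • (c - c * c) = c - c * c + (c - c * c) := two_smul F _
      rw [h3] at h2
      linear_combination (norm := abel) h2
    -- apply b₁ to hkey
    have := congrArg (fun z => b₁ * z) hkey
    simp only [mul_add, mul_sub, hb₁u, hb₁c, hccE, huuE] at this
    rw [add_zero] at this
    exact (eq_of_sub_eq_zero this.symm).symm
  have hcu0 : c * u = 0 := by rw [hcu, hcc, sub_self]
  have hcv0 : c * v = 0 := by rw [hcv, hcc, sub_self]
  have huu : u * u = u := by
    have h1 : u * b₀ = u := by rw [mul_comm]; exact hb₀u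
    have h2 : u * (c + u) = u := by
      have : b₀ = c + u := by rw [hu]; abel
      rw [← this]; exact h1
    rw [mul_add, mul_comm u c, hcu0, zero_add] at h2
    exact h2
  have hvv : v * v = v := by
    have h1 : v * b₁ = v := by rw [mul_comm]; exact hb₁v
    have h2 : v * (c + v) = v := by
      have : b₁ = c + v := by rw [hv]; abel
      rw [← this]; exact h1
    rw [mul_add, mul_comm v c, hcv0, zero_add] at h2
    exact h2
  have huv : u * v = 0 := by
    have h1 : v * b₀ = 0 := by rw [mul_comm]; exact hb₀v
    have h2 : v * (c + u) = 0 := by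
      have : b₀ = c + u := by rw [hu]; abel
      rw [← this]; exact h1
    rw [mul_add, mul_comm v c, hcv0, zero_add, mul_comm v u] at h2
    exact h2
  -- the homomorphism
  let φ : (Fin 3 → F) →ₙₐ[F] N.carrier :=
    { toFun := fun x => x 0 • c + x 1 • u + x 2 • v
      map_smul' := by
        intro r x
        simp only [Pi.smul_apply, smul_eq_mul, RingHom.id_apply, MonoidHom.id_apply, mul_smul, smul_add]
      map_zero' := by simp
      map_add' := by
        intro x y
        simp only [Pi.add_apply, add_smul]
        abel
      map_mul' := by
        intro x y
        show (x * y) 0 • c + (x * y) 1 • u + (x * y) 2 • v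
          = (x 0 • c + x 1 • u + x 2 • v) * (y 0 • c + y 1 • u + y 2 • v)
        simp only [Pi.mul_apply]
        rw [add_mul, add_mul, mul_add, mul_add, mul_add, mul_add, mul_add, mul_add]
        simp only [smul_mul_smul_comm, hcc, huu, hvv, hcu0, hcv0, huv,
          mul_comm u c, mul_comm v c, mul_comm v u, smul_zero]
        simp only [add_zero, zero_add] }
  have hφval : ∀ x : Fin 3 → F, φ x = x 0 • c + x 1 • u + x 2 • v := fun _ => rfl
  have hφ₀ : φ (a + s₀) = b₀ := by
    rw [hφval]
    have e0 : (a + s₀) 0 = 1 := by simp [ha, hs₀, Pi.single]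
    have e1 : (a + s₀) 1 = 1 := by simp [ha, hs₀, Pi.single]
    have e2 : (a + s₀) 2 = 0 := by simp [ha, hs₀, Pi.single]
    rw [e0, e1, e2, one_smul, one_smul, zero_smul, add_zero, hu]
    abel
  have hφ₁ : φ (a + s₁) = b₁ := by
    rw [hφval]
    have e0 : (a + s₁) 0 = 1 := by simp [ha, hs₁, Pi.single]
    have e1 : (a + s₁) 1 = 0 := by simp [ha, hs₁, Pi.single]
    have e2 : (a + s₁) 2 = 1 := by simp [ha, hs₁, Pi.single]
    rw [e0, e1, e2, one_smul, one_smul, zero_smul, add_zero, hv]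
    abel
  -- any hom with the right values agrees with the formula
  have hformula : ∀ ψ : (Fin 3 → F) →ₙₐ[F] N.carrier,
      ψ (a + s₀) = b₀ → ψ (a + s₁) = b₁ →
      ∀ x, ψ x = x 0 • c + x 1 • u + x 2 • v := by
    intro ψ h0 h1 x
    have := congrArg ψ (hdecomp x)
    simp only [map_add, map_smul, map_mul, map_sub, h0, h1] at this
    rw [this, ← hc, ← hu, ← hv]
  constructor
  · refine ⟨φ, ⟨hφ₀, hφ₁⟩, ?_⟩
    intro ψ ⟨h0, h1⟩
    apply NonUnitalAlgHom.ext
    intro x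
    rw [hformula ψ h0 h1 x, hφval]
  · intro ψ ⟨h0, h1⟩ y
    have hy : y ∈ NonUnitalAlgebra.adjoin F {b₀, b₁} := by rw [hNadj]; trivial
    have hle : NonUnitalAlgebra.adjoin F {b₀, b₁}
        ≤ NonUnitalAlgHom.range (R := F) ψ := by
      apply NonUnitalAlgebra.adjoin_le
      rintro z (rfl | rfl)
      · exact ⟨a + s₀, h0⟩
      · exact ⟨a + s₁, h1⟩
    obtain ⟨x, hx⟩ := (NonUnitalAlgHom.mem_range ψ).mp (hle hy)
    exact ⟨x, hx⟩
end
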